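/- Let (P,≪) be a dual CL-shellable pair, R a commutative ring with unit, Q ⊂ P_{≺1̂} an initial segment of ≪_{1̂}, h the least coatom of P∖Q in the order ≪_{1̂}, and F : P^op → R-Mod a functor such that the natural morphism F(h) → lim_{⟨C(h)⟩} F is a split epimorphism. Then the restriction morphism lim_{⟨Q∪{h}⟩} F → lim_{⟨Q⟩} F is also a split epimorphism. -/

import Mathlib

open CategoryTheory CategoryTheory.Limits Opposite

section Posets

variable {P : Type} [PartialOrder P]

/-- An unrefinable chain (list of elements, consecutive ones being covers) ending at `t`.
A list `c = [c₀, …, cₙ]` represents the chain `c₀ ≺ c₁ ≺ … ≺ cₙ = t` of length `n`. -/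
def IsChainTo (t : P) (c : List P) : Prop :=
  c.Chain' (· ⋖ ·) ∧ c.getLast? = some t

/-- A filtered poset: a poset together with a degree function `d`, where `d p` is the
maximal length of an unrefinable chain ending at `p`, and `d` is strictly order preserving. -/
structure DegreeFunction (P : Type) [PartialOrder P] where
  d : P → ℕ
  length_le : ∀ (p : P) (c : List P), c.Chain' (· ⋖ ·) → c.getLast? = some p →
    c.length ≤ d p + 1
  exists_chain : ∀ p : P, ∃ c : List P, c.Chain' (· ⋖ ·) ∧ c.getLast? = some p ∧
    c.length = d p + 1
  strictMono : StrictMono d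

/-- `p` has codegree `n` (relative to the maximum `t`): the minimal length of an
unrefinable chain from `p` to `t` is `n`. -/
def HasCodegree (t p : P) (n : ℕ) : Prop :=
  (∃ c : List P, c.head? = some p ∧ IsChainTo t c ∧ c.length = n + 1) ∧
  (∀ (m : ℕ) (c : List P), c.head? = some p → IsChainTo t c → c.length = m + 1 → n ≤ m)

/-- A bounded poset is pure if all maximal chains (i.e. unrefinable chains from `⊥` to `⊤`)
have the same length. -/
def IsPurePoset (P : Type) [PartialOrder P] [BoundedOrder P] : Prop :=
  ∀ c c' : List P, c.head? = some ⊥ → IsChainTo ⊤ c → c'.head? = some ⊥ → IsChainTo ⊤ c' →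
    c.length = c'.length

/-- `S` is an initial segment of the order `ll` on the coatoms of `t`. -/
def InitialSegIn (ll : P → P → Prop) (t : P) (S : Set P) : Prop :=
  S ⊆ {x | x ⋖ t} ∧ ∀ x ∈ S, ∀ y, y ⋖ t → ll y x → y ∈ S

/-- The set `C(c)` attached to an unrefinable chain `c = c₀ ≺ c₁ ≺ … ≺ t` and a family of
orders `ll` indexed by chains: `C(c) = {x ≺ c₀ ∣ x < h ≺ c₁ for some h ≪_{c'} c₀}`,
where `c' = c₁ ≺ … ≺ t`; it is empty for chains of length 0. -/
def chainCSet (ll : List P → P → P → Prop) (c : List P) : Set P :=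
  {x | ∃ c₀ c₁ rest, c = c₀ :: c₁ :: rest ∧ x ⋖ c₀ ∧
        ∃ h, h ⋖ c₁ ∧ x < h ∧ ll (c₁ :: rest) h c₀}

/-- A recursive coatom ordering on a poset `P` with maximum `t`: for every unrefinable
chain `c` ending at `t` with head `c₀`, a well-order `ll c` of the coatoms of `c₀`
satisfying the axioms CL0, CL1 and CL2.  A pair `(P, ≪)` consisting of a bounded poset
and a recursive coatom ordering is a dual CL-shellable pair. -/
structure RecursiveCoatomOrdering (P : Type) [PartialOrder P] (t : P) : Type where
  ll : List P → P → P → Prop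
  trans : ∀ c, Transitive (ll c)
  irrefl : ∀ c x, ¬ ll c x x
  total : ∀ c c₀, IsChainTo t c → c.head? = some c₀ →
    ∀ x y, x ⋖ c₀ → y ⋖ c₀ → ll c x y ∨ x = y ∨ ll c y x
  wf : ∀ c c₀, IsChainTo t c → c.head? = some c₀ → Set.WellFoundedOn {x | x ⋖ c₀} (ll c)
  cl0 : ∀ c c₀, IsChainTo t c → c.head? = some c₀ → ∀ S : Set P, InitialSegIn (ll c) c₀ S →
    S.Finite ∨ Nonempty ((fun a b : S => ll c a b) ≃r ((· < ·) : ℕ → ℕ → Prop))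
  cl1 : ∀ c c₀, IsChainTo t c → c.head? = some c₀ → InitialSegIn (ll c) c₀ (chainCSet ll c)
  cl2 : ∀ c c₀, IsChainTo t c → c.head? = some c₀ →
    ∀ h h' p, h ⋖ c₀ → h' ⋖ c₀ → ll c h' h → p < h → p < h' →
      ∃ h'' q, h'' ⋖ c₀ ∧ ll c h'' h ∧ q ⋖ h ∧ p ≤ q ∧ q < h''

/-- The set `C(c)` of a recursive coatom ordering. -/
def RecursiveCoatomOrdering.C {t : P} (O : RecursiveCoatomOrdering P t) (c : List P) :
    Set P :=
  chainCSet O.ll c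

lemma RecursiveCoatomOrdering.C_lt {t : P} (O : RecursiveCoatomOrdering P t) {c : List P}
    {c₀ : P} (hc : c.head? = some c₀) {x : P} (hx : x ∈ O.C c) : x < c₀ := by
  obtain ⟨a, b, rest, rfl, hcov, -⟩ := hx
  simp only [List.head?] at hc
  cases hc
  exact hcov.lt

lemma lowerClosure_C_le {t : P} (O : RecursiveCoatomOrdering P t) {c : List P}
    {c₀ : P} (hc : c.head? = some c₀) :
    ∀ q ∈ (lowerClosure (O.C c) : Set P), q ≤ c₀ := by
  rintro q ⟨x, hx, hqx⟩
  exact hqx.trans (O.C_lt hc hx).le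

end Posets
open CategoryTheory CategoryTheory.Limits Opposite

section Cat

variable {P : Type} [PartialOrder P] {C : Type*} [Category C]

/-- Restriction of a contravariant functor to a subposet. -/
noncomputable def restr (F : Pᵒᵖ ⥤ C) (S : Set P) : (↥S)ᵒᵖ ⥤ C :=
  (Monotone.functor (f := (Subtype.val : S → P)) (fun _ _ h => h)).op ⋙ F

/-- Restriction of a covariant functor to a subposet. -/
noncomputable def corestr (F : P ⥤ C) (S : Set P) : ↥S ⥤ C :=
  Monotone.functor (f := (Subtype.val : S → P)) (fun _ _ h => h) ⋙ F

/-- The natural map `F(p) → lim_S F` for a subposet `S` of elements below `p`. -/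
noncomputable def toLim (F : Pᵒᵖ ⥤ C) (S : Set P) (p : P) (hS : ∀ q ∈ S, q ≤ p)
    [HasLimit (restr F S)] : F.obj (op p) ⟶ limit (restr F S) :=
  limit.lift (restr F S)
    { pt := F.obj (op p)
      π :=
        { app := fun q => F.map (homOfLE (hS (unop q).val (unop q).property)).op
          naturality := by
            intro q q' f
            dsimp [restr]
            rw [Category.id_comp]
            first
              | exact (F.map_comp _ _).symm
              | (erw [← F.map_comp]; congr 1) } }

/-- The natural map `colim_S F → F(p)` for a subposet `S` of elements below `p`. -/
noncomputable def fromColim (F : P ⥤ C) (S : Set P) (p : P) (hS : ∀ q ∈ S, q ≤ p)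
    [HasColimit (corestr F S)] : colimit (corestr F S) ⟶ F.obj p :=
  colimit.desc (corestr F S)
    { pt := F.obj p
      ι :=
        { app := fun q => F.map (homOfLE (hS q.val q.property))
          naturality := by
            intro q q' f
            dsimp [corestr]
            rw [Category.comp_id, ← F.map_comp]
            congr 1 } }

end Cat
open CategoryTheory CategoryTheory.Limits Opposite

section Derived

variable (R : Type) [CommRing R]

noncomputable instance limAdditive (Q : Type) [PartialOrder Q] :
    (lim (J := Qᵒᵖ) (C := ModuleCat.{0} R)).Additive :=
  Functor.additive_of_preserves_binary_products _

noncomputable instance colimAdditive (Q : Type) [PartialOrder Q] :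
    (colim (J := Q) (C := ModuleCat.{0} R)).Additive := by
  have := preservesBinaryBiproducts_of_preservesBinaryCoproducts
    (colim (J := Q) (C := ModuleCat.{0} R))
  exact Functor.additive_of_preservesBinaryBiproducts _

/-- The `i`-th higher limit `H^i(Q; F)` of a functor `F : Qᵒᵖ → R-Mod` over a poset `Q`:
the `i`-th right derived functor of the limit functor, evaluated at `F`. -/
noncomputable def higherLim (Q : Type) [PartialOrder Q] (i : ℕ)
    [HasInjectiveResolutions (Qᵒᵖ ⥤ ModuleCat.{0} R)] (F : Qᵒᵖ ⥤ ModuleCat.{0} R) :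
    ModuleCat.{0} R :=
  ((lim (J := Qᵒᵖ) (C := ModuleCat.{0} R)).rightDerived i).obj F

/-- The `i`-th higher colimit `H_i(Q; F)` of a functor `F : Q → R-Mod` over a poset `Q`:
the `i`-th left derived functor of the colimit functor, evaluated at `F`. -/
noncomputable def higherColim (Q : Type) [PartialOrder Q] (i : ℕ)
    [HasProjectiveResolutions (Q ⥤ ModuleCat.{0} R)] (F : Q ⥤ ModuleCat.{0} R) :
    ModuleCat.{0} R :=
  ((colim (J := Q) (C := ModuleCat.{0} R)).leftDerived i).obj F

end Derived

section Stability

variable {P : Type} [PartialOrder P] {t : P} (R : Type) [CommRing R]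

/-- `(P, ≪, F)` has the stability property at degree `i`: for every unrefinable chain
`c = c₀ ≺ c₁ ≺ … ≺ c_i = t` of length `i`, the natural map `F(c₀) → lim_{⟨C(c)⟩} F`
is surjective. -/
noncomputable def IsStableAt (O : RecursiveCoatomOrdering P t) (F : Pᵒᵖ ⥤ ModuleCat.{0} R)
    (i : ℕ) : Prop :=
  ∀ (c : List P) (c₀ : P) (_ : IsChainTo t c) (hc₀ : c.head? = some c₀)
    (_ : c.length = i + 1),
    Function.Surjective
      (toLim F (lowerClosure (O.C c) : Set P) c₀ (lowerClosure_C_le O hc₀))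

/-- `(P, ≪, F)` has the co-stability property at degree `i`: for every unrefinable chain
`c = c₀ ≺ c₁ ≺ … ≺ c_i = t` of length `i`, the natural map `colim_{⟨C(c)⟩} F → F(c₀)`
is injective. -/
noncomputable def IsCostableAt (O : RecursiveCoatomOrdering P t) (F : P ⥤ ModuleCat.{0} R)
    (i : ℕ) : Prop :=
  ∀ (c : List P) (c₀ : P) (_ : IsChainTo t c) (hc₀ : c.head? = some c₀)
    (_ : c.length = i + 1),
    Function.Injective
      (fromColim F (lowerClosure (O.C c) : Set P) c₀ (lowerClosure_C_le O hc₀))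

end Stability

section LimRes

variable {P : Type} [PartialOrder P] {C : Type*} [Category C]

/-- The restriction morphism `lim_S F → lim_T F` for subposets `T ⊆ S`. -/
noncomputable def limRes (F : Pᵒᵖ ⥤ C) {S T : Set P} (hTS : T ⊆ S)
    [HasLimit (restr F S)] [HasLimit (restr F T)]
    [HasLimit ((Monotone.functor (f := Set.inclusion hTS)
        (fun _ _ h => h)).op ⋙ restr F S)] :
    limit (restr F S) ⟶ limit (restr F T) :=
  limit.pre (restr F S) (Monotone.functor (f := Set.inclusion hTS) (fun _ _ h => h)).op

end LimRes

/-- **Lemma (adding the next coatom gives a split epimorphism of limits).**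
Let `(P, ≪)` be a dual CL-shellable pair, `R` a commutative ring with unit,
`Q ⊆ P_{≺1̂}` an initial segment of `≪_{1̂}`, `h` the `≪_{1̂}`-least coatom not in `Q`,
and `F : Pᵒᵖ → R-Mod` a functor such that `F(h) → lim_{⟨C(h)⟩} F` is a split
epimorphism.  Then the restriction morphism `lim_{⟨Q ∪ {h}⟩} F → lim_{⟨Q⟩} F` is a
split epimorphism. -/
theorem limit_restriction_split_epi
    {P : Type} [PartialOrder P] [BoundedOrder P] (D : DegreeFunction P)
    (O : RecursiveCoatomOrdering P (⊤ : P)) (R : Type) [CommRing R]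
    (Q : Set P) (hQcoatoms : Q ⊆ {x | x ⋖ ⊤})
    (hQinit : InitialSegIn (O.ll [⊤]) ⊤ Q)
    (h : P) (hcoatom : h ⋖ ⊤) (hnotin : h ∉ Q)
    (hleast : ∀ h' : P, h' ⋖ ⊤ → h' ∉ Q → h' ≠ h → O.ll [⊤] h h')
    (F : Pᵒᵖ ⥤ ModuleCat.{0} R)
    (hsplit : IsSplitEpi
      (toLim F (lowerClosure (O.C [h, ⊤]) : Set P) h
        (lowerClosure_C_le O (c := [h, ⊤]) rfl))) :
    IsSplitEpi
      (limRes F (S := (lowerClosure (Q ∪ {h}) : Set P))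
        (T := (lowerClosure Q : Set P))
        (lowerClosure_mono (Set.subset_union_left))) := by
  classical
  have chainTop : IsChainTo (⊤ : P) [⊤] := ⟨List.isChain_singleton _, rfl⟩
  have hQmem : ∀ h' : P, h' ⋖ ⊤ → O.ll [⊤] h' h → h' ∈ Q := by
    intro h' hc hll
    by_contra hn
    have hne : h' ≠ h := by rintro rfl; exact O.irrefl _ _ hll
    exact O.irrefl _ _ (O.trans _ hll (hleast h' hc hn hne))
  have hCsub : (lowerClosure (O.C [h, ⊤]) : Set P) ⊆ (lowerClosure Q : Set P) := by
    rintro x ⟨y, hy, hxy⟩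
    obtain ⟨c₀, c₁, rest, heq, hcov, h₁, hc₁, hlt, hll⟩ := hy
    obtain ⟨rfl, rfl, rfl⟩ : h = c₀ ∧ ⊤ = c₁ ∧ ([] : List P) = rest := by
      simpa using heq
    exact ⟨h₁, hQmem h₁ hc₁ hll, hxy.trans hlt.le⟩
  have coatom_eq : ∀ a b : P, a ⋖ ⊤ → b ⋖ ⊤ → a ≤ b → a = b := by
    intro a b ha hb hab
    rcases lt_or_eq_of_le hab with hl | he
    · exact absurd hb.1 (ha.2 hl)
    · exact he
  have hkey : ∀ p : P, p ∈ (lowerClosure Q : Set P) → p ≤ h →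
      p ∈ (lowerClosure (O.C [h, ⊤]) : Set P) := by
    rintro p ⟨h', hh', hph'⟩ hph
    have hc' : h' ⋖ ⊤ := hQcoatoms hh'
    have hne : h' ≠ h := fun e => hnotin (e ▸ hh')
    have hll : O.ll [⊤] h' h := by
      rcases O.total [⊤] ⊤ chainTop rfl h' h hc' hcoatom with h1 | h1 | h1
      · exact h1
      · exact absurd h1 hne
      · exact absurd (hQinit.2 h' hh' h hcoatom h1) hnotin
    have hplt : p < h := lt_of_le_of_ne hph (by
      rintro rfl
      exact hne (coatom_eq p h' hcoatom hc' hph').symm)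
    have hplt' : p < h' := lt_of_le_of_ne hph' (by
      rintro rfl
      exact hne (coatom_eq p h hc' hcoatom hph))
    obtain ⟨h'', q, hh''cov, hll'', hqcov, hpq, hqlt⟩ :=
      O.cl2 [⊤] ⊤ chainTop rfl h h' p hcoatom hc' hll hplt hplt'
    exact ⟨q, ⟨h, ⊤, [], rfl, hqcov, h'', hh''cov, hqlt, hll''⟩, hpq⟩
  have le_h : ∀ p : P, p ∈ (lowerClosure (Q ∪ {h}) : Set P) →
      p ∉ (lowerClosure Q : Set P) → p ≤ h := by
    rintro p ⟨y, (hy | hy), hpy⟩ hp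
    · exact absurd ⟨y, hy, hpy⟩ hp
    · exact hy ▸ hpy
  obtain ⟨⟨s, hs⟩⟩ := hsplit
  -- the section cone
  refine ⟨⟨⟨limit.lift (restr F (lowerClosure (Q ∪ {h}) : Set P))
    { pt := limit (restr F (lowerClosure Q : Set P))
      π :=
      { app := fun j =>
          if hj : ((j.unop : ↥(lowerClosure (Q ∪ {h}) : Set P)) : P) ∈
              (lowerClosure Q : Set P) then
            limit.π (restr F (lowerClosure Q : Set P)) (op ⟨(j.unop : P), hj⟩)
          else
            limRes F hCsub ≫ s ≫
              F.map (homOfLE (le_h (j.unop : P) (j.unop).2 hj)).op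
        naturality := ?_ } }, ?_⟩⟩⟩
  · rintro ⟨a⟩ ⟨b⟩ f
    have hle : (b : P) ≤ (a : P) := leOfHom f.unop
    dsimp only
    rw [Functor.const_obj_map]
    erw [Category.id_comp]
    have hmap : (restr F (lowerClosure (Q ∪ {h}) : Set P)).map f =
        F.map (homOfLE hle).op := rfl
    by_cases ha : (a : P) ∈ (lowerClosure Q : Set P)
    · have hb : (b : P) ∈ (lowerClosure Q : Set P) :=
        (lowerClosure Q).lower hle ha
      erw [dif_pos ha, dif_pos hb]
      rw [hmap]
      exact (limit.w (restr F (lowerClosure Q : Set P))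
        (f := (homOfLE hle : (⟨(b : P), hb⟩ : ↥(lowerClosure Q : Set P)) ⟶
          ⟨(a : P), ha⟩).op)).symm
    · by_cases hb : (b : P) ∈ (lowerClosure Q : Set P)
      · -- key case
        have hbh : (b : P) ≤ h := hle.trans (le_h _ a.2 ha)
        have hbC : (b : P) ∈ (lowerClosure (O.C [h, ⊤]) : Set P) := hkey _ hb hbh
        erw [dif_pos hb, dif_neg ha]
        erw [hmap, Category.assoc, Category.assoc,
          ← F.map_comp, ← op_comp, homOfLE_comp]
        have h1 : s ≫ F.map (homOfLE hbh).op =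
            limit.π (restr F (lowerClosure (O.C [h, ⊤]) : Set P)) (op ⟨(b : P), hbC⟩) := by
          have h2 : toLim F (lowerClosure (O.C [h, ⊤]) : Set P) h
                (lowerClosure_C_le O (c := [h, ⊤]) rfl) ≫
              limit.π (restr F (lowerClosure (O.C [h, ⊤]) : Set P)) (op ⟨(b : P), hbC⟩) =
              F.map (homOfLE hbh).op := limit.lift_π _ _
          erw [← h2, ← Category.assoc, hs, Category.id_comp]
        erw [h1]
        exact (limit.pre_π (restr F (lowerClosure Q : Set P))
          (Monotone.functor (f := Set.inclusion hCsub) (fun _ _ h => h)).op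
          (op ⟨(b : P), hbC⟩)).symm
      · erw [dif_neg ha, dif_neg hb]
        erw [hmap, Category.assoc, Category.assoc,
          ← F.map_comp, ← op_comp, homOfLE_comp]
        rfl
  · apply limit.hom_ext
    intro j
    rw [Category.assoc, Category.id_comp]
    have hpre : limRes F (S := (lowerClosure (Q ∪ {h}) : Set P))
        (T := (lowerClosure Q : Set P)) (lowerClosure_mono Set.subset_union_left) ≫
        limit.π (restr F (lowerClosure Q : Set P)) j =
        limit.π (restr F (lowerClosure (Q ∪ {h}) : Set P))
          (op ⟨((j.unop : ↥(lowerClosure Q : Set P)) : P),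
            lowerClosure_mono Set.subset_union_left (j.unop).2⟩) :=
      limit.pre_π (restr F (lowerClosure (Q ∪ {h}) : Set P))
        (Monotone.functor (f := Set.inclusion (lowerClosure_mono Set.subset_union_left))
          (fun _ _ h => h)).op j
    rw [hpre]
    exact (limit.lift_π _ _).trans (dif_pos (j.unop).2)
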